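/- Let D be a weak DBA with n states recognising L, and let u ∈ Σ*, x, y ∈ Σ⁺. If the state T(u·x^n) lies in an accepting SCC of D and T(u·x^n) = T(u·x^n·x), then u·x^ω ∈ L. -/

import Mathlib

/-!
The state `q = T(u·x^n)` lies in `F` and is fixed by `x`, so the run on `u·x^ω` is in `q` after
each prefix `u·x^(n+m)`; these prefixes are arbitrarily long.
-/

/-- `wpow v k = v^k`, the `k`-fold concatenation of `v`. -/
def wpow {A : Type*} (v : List A) (k : ℕ) : List A :=
  (List.replicate k v).flatten

/-- `upWord u v _ = u · v^ω` as a function `ℕ → A`. -/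
def upWord {A : Type*} (u v : List A) (hv : v ≠ []) : ℕ → A :=
  fun i =>
    if h : i < u.length then u.get ⟨i, h⟩
    else v.get ⟨(i - u.length) % v.length, Nat.mod_lt _ (List.length_pos_iff.mpr hv)⟩

/-- The run of a deterministic automaton on an infinite word. -/
def run {A Q : Type*} (δ : Q → A → Q) (q₀ : Q) (w : ℕ → A) : ℕ → Q
  | 0 => q₀
  | n + 1 => δ (run δ q₀ w n) (w n)

section Words

variable {A : Type*}

theorem wpow_add (v : List A) (k m : ℕ) : wpow v (k + m) = wpow v k ++ wpow v m := by
  simp only [wpow, List.replicate_add, List.flatten_append]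

theorem wpow_one (v : List A) : wpow v 1 = v := by
  simp [wpow]

theorem length_wpow (v : List A) (k : ℕ) : (wpow v k).length = k * v.length := by
  simp [wpow]

theorem getElem_wpow (v : List A) (k j : ℕ) (hj : j < (wpow v k).length)
    (hv : 0 < v.length) : (wpow v k)[j] = v[j % v.length]'(Nat.mod_lt _ hv) := by
  induction k generalizing j with
  | zero => simp [wpow] at hj
  | succ k ih =>
    simp only [Nat.add_comm k 1, wpow_add, wpow_one] at hj ⊢
    rcases lt_or_ge j v.length with hjv | hjv
    · simp [List.getElem_append_left hjv, Nat.mod_eq_of_lt hjv]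
    · rw [List.getElem_append_right hjv, ih _ (by simp only [List.length_append] at hj; omega)]
      simp only [← Nat.mod_eq_sub_mod hjv]

theorem upWord_eq_getElem_append_wpow (u x : List A) (hx : x ≠ []) (k i : ℕ)
    (hi : i < (u ++ wpow x k).length) : upWord u x hx i = (u ++ wpow x k)[i] := by
  unfold upWord
  split_ifs with hiu
  · simp [List.getElem_append_left hiu]
  · push Not at hiu
    rw [List.getElem_append_right hiu, getElem_wpow _ _ _ _ (List.length_pos_iff.mpr hx)]
    rfl

end Words

section Runs

variable {A Q : Type*} (δ : Q → A → Q)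

theorem run_length_eq_foldl (q₀ : Q) (w : ℕ → A) (l : List A)
    (hw : ∀ i (hi : i < l.length), w i = l[i]) : run δ q₀ w l.length = l.foldl δ q₀ := by
  induction l using List.reverseRecOn with
  | nil => rfl
  | append_singleton l a ih =>
    have hprefix : run δ q₀ w l.length = l.foldl δ q₀ :=
      ih fun i hi => by rw [hw i (by rw [List.length_append]; omega), List.getElem_append_left hi]
    have hlast : w l.length = a := by simpa using hw l.length (by simp)
    simp [run, hprefix, hlast]

theorem foldl_wpow_of_foldl_eq {x : List A} {q : Q} (hq : x.foldl δ q = q) (m : ℕ) :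
    (wpow x m).foldl δ q = q := by
  induction m with
  | zero => rfl
  | succ m ih => rw [wpow_add, wpow_one, List.foldl_append, ih, hq]

theorem run_upWord_length_append_wpow (q₀ : Q) (u x : List A) (hx : x ≠ []) (k : ℕ) :
    run δ q₀ (upWord u x hx) (u ++ wpow x k).length = (u ++ wpow x k).foldl δ q₀ :=
  run_length_eq_foldl δ q₀ _ _ (upWord_eq_getElem_append_wpow u x hx k)

theorem frequently_run_upWord_mem_of_loop (q₀ : Q) (F : Set Q) (u x : List A) (hx : x ≠ [])
    (k : ℕ) (hF : (u ++ wpow x k).foldl δ q₀ ∈ F)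
    (hloop : x.foldl δ ((u ++ wpow x k).foldl δ q₀) = (u ++ wpow x k).foldl δ q₀) (N : ℕ) :
    ∃ n ≥ N, run δ q₀ (upWord u x hx) n ∈ F := by
  refine ⟨(u ++ wpow x (k + N)).length, ?_, ?_⟩
  · have hxlen : 1 ≤ x.length := List.length_pos_iff.mpr hx
    simp only [List.length_append, length_wpow]
    nlinarith
  · rwa [run_upWord_length_append_wpow, wpow_add, ← List.append_assoc, List.foldl_append,
      foldl_wpow_of_foldl_eq δ hloop]

end Runs

theorem stmt_16_general {A Q : Type*} [Fintype Q]
    (δ : Q → A → Q) (q₀ : Q) (F : Set Q)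
    (u x : List A) (hx : x ≠ [])
    (haccSCC : ∀ p : Q,
      (∃ a : List A, a.foldl δ ((u ++ wpow x (Fintype.card Q)).foldl δ q₀) = p) →
      (∃ b : List A, b.foldl δ p = (u ++ wpow x (Fintype.card Q)).foldl δ q₀) →
      p ∈ F)
    (hloop : (u ++ wpow x (Fintype.card Q)).foldl δ q₀
        = (u ++ wpow x (Fintype.card Q) ++ x).foldl δ q₀) :
    ∀ N : ℕ, ∃ n ≥ N, run δ q₀ (upWord u x hx) n ∈ F :=
  frequently_run_upWord_mem_of_loop δ q₀ F u x hx _ (haccSCC _ ⟨[], rfl⟩ ⟨[], rfl⟩)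
    (by rw [← List.foldl_append, ← hloop])

/-- in a weak DBA with `n` states, if the state `T(u·x^n)` lies
in an accepting SCC (every state mutually reachable with it is in `F`) and
`T(u·x^n) = T(u·x^n·x)`, then `u·x^ω` is accepted. -/
theorem stmt_16 {A Q : Type*} [Fintype A] [Fintype Q]
    (δ : Q → A → Q) (q₀ : Q) (F : Set Q)
    (hweak : ∀ p q : Q, (∃ a : List A, a.foldl δ p = q) →
      (∃ b : List A, b.foldl δ q = p) → (p ∈ F ↔ q ∈ F))
    (u x : List A) (hx : x ≠ [])
    (haccSCC : ∀ p : Q,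
      (∃ a : List A, a.foldl δ ((u ++ wpow x (Fintype.card Q)).foldl δ q₀) = p) →
      (∃ b : List A, b.foldl δ p = (u ++ wpow x (Fintype.card Q)).foldl δ q₀) →
      p ∈ F)
    (hloop : (u ++ wpow x (Fintype.card Q)).foldl δ q₀
        = (u ++ wpow x (Fintype.card Q) ++ x).foldl δ q₀) :
    ∀ N : ℕ, ∃ n ≥ N, run δ q₀ (upWord u x hx) n ∈ F :=
  stmt_16_general δ q₀ F u x hx haccSCC hloop
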